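/- Let L = (ka ⊕ kb) * (kx) be the free product (over a field k) of a 2-dimensional abelian Lie algebra M = ka ⊕ kb and a 1-dimensional Lie algebra kx, and let J be the ideal of L generated by x. Then J is a free Lie algebra with free basis T = { ad(a)^i ad(b)^j (x) : i, j ≥ 0 }, where ad(y)(s) = [s,y]. -/

import Mathlib

/-!
The ideal `J` is the image of `e : F → L`, `(i, j) ↦ T i j`, where `F = FreeLieAlgebra k (ℕ × ℕ)`.
Injectivity: the shifts `(i, j) ↦ (i + 1, j)` and `(i, j) ↦ (i, j + 1)` extend to commuting
derivations of `F`, so sending `a`, `b` to minus these derivations and `x` to the generator `(0, 0)`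
defines a map from `L` to the holomorph `F ⋊ Der F`; it sends `T i j` to `(i, j)`, so its composite
with `e` is the inclusion of `F`. Image: the Lie subalgebra generated by `T` is normalised by `a`
and `b`, which shift `T`, and by `x ∈ T`, so it is an ideal; it contains `x` and lies in `J`.
-/
universe u

open FreeLieAlgebra

variable (k : Type u) [Field k]

/-- The relator ideal of `L = ⟨a,b,x | [a,b]⟩` inside the free Lie algebra on `a,b,x`. -/
noncomputable def relIdeal : LieIdeal k (FreeLieAlgebra k (Fin 3)) :=
  LieSubmodule.lieSpan k (FreeLieAlgebra k (Fin 3))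
    ({⁅of k (0 : Fin 3), of k (1 : Fin 3)⁆} : Set (FreeLieAlgebra k (Fin 3)))

/-- `L = (ka ⊕ kb) * kx = ⟨a,b,x | [a,b]⟩`, the free product of the two-dimensional abelian
Lie algebra on `a,b` with the one-dimensional Lie algebra on `x`. -/
noncomputable def Lfp : Type u := FreeLieAlgebra k (Fin 3) ⧸ relIdeal k

noncomputable instance : LieRing (Lfp k) := by unfold Lfp; infer_instance
noncomputable instance : LieAlgebra k (Lfp k) := by unfold Lfp; infer_instance

/-- The images of the generators `a`, `b`, `x` in `L`. -/
noncomputable def gen (i : Fin 3) : Lfp k :=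
  LieSubmodule.Quotient.mk' (relIdeal k) (of k i)

/-- The ideal `J` of `L` generated by `x`. -/
noncomputable def Jideal : LieIdeal k (Lfp k) :=
  LieSubmodule.lieSpan k (Lfp k) ({gen k 2} : Set (Lfp k))

/-- `T i j = ad(a)^i ad(b)^j (x)`, where `ad(y)(s) = ⁅s,y⁆`. -/
noncomputable def Telt (i j : ℕ) : Lfp k :=
  (fun s => ⁅s, gen k 0⁆)^[i] ((fun s => ⁅s, gen k 1⁆)^[j] (gen k 2))

open LieAlgebra LieModule.Cohomology

namespace LieSubalgebra

variable {R L : Type*} [CommRing R] [LieRing L] [LieAlgebra R L]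

theorem mem_normalizer_lieSpan {s : Set L} {x : L} (h : ∀ y ∈ s, ⁅x, y⁆ ∈ lieSpan R L s) :
    x ∈ (lieSpan R L s).normalizer := by
  rw [mem_normalizer_iff]
  intro y hy
  induction hy using lieSpan_induction with
  | mem y hy => exact h y hy
  | zero => simp
  | add y z _ _ hy hz => rw [lie_add]; exact add_mem hy hz
  | smul t y _ hy => rw [lie_smul]; exact LieSubalgebra.smul_mem _ t hy
  | lie y z hy' hz' hy hz =>
    rw [leibniz_lie]
    exact add_mem (lie_mem _ hy hz') (lie_mem _ hy' hz)

theorem lieSpan_le_of_normalizer_eq_top {K : LieSubalgebra R L} (hK : K.normalizer = ⊤) {s : Set L}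
    (hs : s ⊆ K) : LieIdeal.toLieSubalgebra R L (LieSubmodule.lieSpan R L s) ≤ K := by
  obtain ⟨I, rfl⟩ := (exists_lieIdeal_coe_eq_iff R K).2 fun x y hy =>
    (mem_normalizer_iff K x).1 (hK ▸ mem_top x) y hy
  exact LieSubmodule.lieSpan_le.2 hs

end LieSubalgebra

namespace LieIdeal

variable {R L L' : Type*} [CommRing R] [LieRing L] [LieAlgebra R L] [LieRing L'] [LieAlgebra R L']
  (I : LieIdeal R L)

def mkQ : L →ₗ⁅R⁆ L ⧸ I :=
  { (LieSubmodule.Quotient.mk' I : L →ₗ[R] L ⧸ I) with map_lie' := rfl }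

theorem mkQ_surjective : Function.Surjective I.mkQ :=
  LieSubmodule.Quotient.surjective_mk' I

def liftQ (f : L →ₗ⁅R⁆ L') (h : I ≤ f.ker) : L ⧸ I →ₗ⁅R⁆ L' :=
  { I.toSubmodule.liftQ f.toLinearMap fun x hx => f.mem_ker.1 (h hx) with
    map_lie' := by
      intro x y
      obtain ⟨x, rfl⟩ := I.mkQ_surjective x
      obtain ⟨y, rfl⟩ := I.mkQ_surjective y
      exact f.map_lie x y }

end LieIdeal

namespace LieAlgebra.ofTwoCocycle

variable {R L M : Type*} [CommRing R] [LieRing L] [LieAlgebra R L] [AddCommGroup M] [Module R M]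
  [LieRingModule L M] [LieModule R L M]

def fst (c : twoCocycle R L M) : ofTwoCocycle c →ₗ⁅R⁆ L where
  toFun x := ((ofProd c).symm x).1
  map_add' _ _ := rfl
  map_smul' _ _ := rfl
  map_lie' := rfl

end LieAlgebra.ofTwoCocycle

namespace FreeLieAlgebra

variable {R X L : Type*} [CommRing R] [LieRing L] [LieAlgebra R L]

theorem lieSpan_range_of : LieSubalgebra.lieSpan R (FreeLieAlgebra R X) (Set.range (of R)) = ⊤ := by
  set S := LieSubalgebra.lieSpan R (FreeLieAlgebra R X) (Set.range (of R))
  have h : S.incl.comp (lift R fun x => ⟨of R x, LieSubalgebra.subset_lieSpan ⟨x, rfl⟩⟩) =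
      LieHom.id := hom_ext fun x => by simp
  refine eq_top_iff.2 fun f _ => ?_
  rw [← LieHom.id_apply (R := R) f, ← h]
  exact Subtype.prop _

theorem range_lift (f : X → L) : (lift R f).range = LieSubalgebra.lieSpan R L (Set.range f) := by
  rw [LieSubalgebra.map_top, ← lieSpan_range_of, LieSubalgebra.map_lieSpan, ← Set.range_comp,
    of_comp_lift]

variable {M : Type*} [AddCommGroup M] [Module R M] [LieRingModule (FreeLieAlgebra R X) M]
  [LieModule R (FreeLieAlgebra R X) M]

/-- The splitting `x ↦ (x, d x)` of the square-zero extension `FreeLieAlgebra R X ⋉ M`, whose second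
component is the derivation extending `d`. -/
noncomputable def graphOfDerivation (d : X → M) :
    FreeLieAlgebra R X →ₗ⁅R⁆ ofTwoCocycle (0 : twoCocycle R (FreeLieAlgebra R X) M) :=
  lift R fun x => ofProd 0 (of R x, d x)

theorem fst_graphOfDerivation (d : X → M) (f : FreeLieAlgebra R X) :
    ((ofProd 0).symm (graphOfDerivation d f)).1 = f :=
  LieHom.congr_fun (hom_ext (F₁ := (ofTwoCocycle.fst 0).comp (graphOfDerivation d)) (F₂ := .id)
    fun x => congr_arg (ofTwoCocycle.fst 0) (lift_of_apply _ x)) f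

noncomputable def liftDerivation (d : X → M) : LieDerivation R (FreeLieAlgebra R X) M where
  toFun f := ((ofProd 0).symm (graphOfDerivation d f)).2
  map_add' f g := by simp
  map_smul' t f := by simp
  leibniz' f g := by simp [bracket_ofTwoCocycle, fst_graphOfDerivation]

@[simp]
theorem liftDerivation_of (d : X → M) (x : X) : liftDerivation d (of R x) = d x := by
  simp [liftDerivation, graphOfDerivation]

end FreeLieAlgebra

abbrev LieAlgebra.Holomorph (R K : Type*) [CommRing R] [LieRing K] [LieAlgebra R K] :=
  K ⋊⁅LieHom.id⁆ LieDerivation R K K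

theorem gen_zero_lie_gen_one : ⁅gen k 0, gen k 1⁆ = 0 := by
  show LieSubmodule.Quotient.mk (N := relIdeal k) ⁅of k (0 : Fin 3), of k 1⁆ = 0
  exact LieSubmodule.Quotient.mk_eq_zero'.2 (LieSubmodule.subset_lieSpan rfl)

theorem lieSpan_range_gen : LieSubalgebra.lieSpan k (Lfp k) (Set.range (gen k)) = ⊤ := by
  have h := congr_arg (LieSubalgebra.map (relIdeal k).mkQ) (lieSpan_range_of (R := k) (X := Fin 3))
  rw [LieSubalgebra.map_lieSpan, ← Set.range_comp, ← LieSubalgebra.map_top] at h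
  exact h.trans ((LieHom.range_eq_top _).2 (relIdeal k).mkQ_surjective)

theorem Telt_succ_left (i j : ℕ) : Telt k (i + 1) j = ⁅Telt k i j, gen k 0⁆ :=
  Function.iterate_succ_apply' _ _ _

theorem Telt_succ_right (i j : ℕ) : Telt k i (j + 1) = ⁅Telt k i j, gen k 1⁆ := by
  induction i with
  | zero => exact Function.iterate_succ_apply' _ _ _
  | succ i ih =>
    rw [Telt_succ_left, Telt_succ_left, ih, lie_lie (Telt k i j) (gen k 0), gen_zero_lie_gen_one,
      lie_zero, zero_sub, lie_skew]

noncomputable def shiftFst :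
    LieDerivation k (FreeLieAlgebra k (ℕ × ℕ)) (FreeLieAlgebra k (ℕ × ℕ)) :=
  liftDerivation fun p => of k (p.1 + 1, p.2)

noncomputable def shiftSnd :
    LieDerivation k (FreeLieAlgebra k (ℕ × ℕ)) (FreeLieAlgebra k (ℕ × ℕ)) :=
  liftDerivation fun p => of k (p.1, p.2 + 1)

theorem shiftFst_lie_shiftSnd : ⁅shiftFst k, shiftSnd k⁆ = 0 :=
  LieDerivation.ext_of_lieSpan_eq_top _ lieSpan_range_of <| by
    rintro _ ⟨p, rfl⟩
    simp [shiftFst, shiftSnd]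

noncomputable def freeToHolomorph :
    FreeLieAlgebra k (Fin 3) →ₗ⁅k⁆ Holomorph k (FreeLieAlgebra k (ℕ × ℕ)) :=
  lift k ![SemiDirectSum.inr _ (-shiftFst k), SemiDirectSum.inr _ (-shiftSnd k),
    SemiDirectSum.inl _ (of k (0, 0))]

theorem relIdeal_le_ker_freeToHolomorph : relIdeal k ≤ (freeToHolomorph k).ker := by
  rw [relIdeal, LieSubmodule.lieSpan_le, Set.singleton_subset_iff, SetLike.mem_coe, LieHom.mem_ker,
    LieHom.map_lie]
  simp [freeToHolomorph, shiftFst_lie_shiftSnd]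

noncomputable def toHolomorph : Lfp k →ₗ⁅k⁆ Holomorph k (FreeLieAlgebra k (ℕ × ℕ)) :=
  (relIdeal k).liftQ (freeToHolomorph k) (relIdeal_le_ker_freeToHolomorph k)

theorem toHolomorph_gen (i : Fin 3) : toHolomorph k (gen k i) = freeToHolomorph k (of k i) := rfl

theorem toHolomorph_Telt (i j : ℕ) :
    toHolomorph k (Telt k i j) = SemiDirectSum.inl _ (of k (i, j)) := by
  induction i with
  | zero =>
    induction j with
    | zero => simp [toHolomorph_gen, Telt, freeToHolomorph]
    | succ j ih =>
      rw [Telt_succ_right, LieHom.map_lie, ih, toHolomorph_gen]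
      simp [freeToHolomorph, shiftSnd]
  | succ i ih =>
      rw [Telt_succ_left, LieHom.map_lie, ih, toHolomorph_gen]
      simp [freeToHolomorph, shiftFst]

noncomputable def liftT : FreeLieAlgebra k (ℕ × ℕ) →ₗ⁅k⁆ Lfp k :=
  lift k fun p => Telt k p.1 p.2

theorem toHolomorph_comp_liftT : (toHolomorph k).comp (liftT k) = SemiDirectSum.inl _ :=
  hom_ext fun p => by simp [liftT, toHolomorph_Telt]

theorem liftT_injective : Function.Injective (liftT k) := by
  intro f g h
  apply SemiDirectSum.inl_injective (LieHom.id (R := k))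
  rw [← toHolomorph_comp_liftT, LieHom.comp_apply, LieHom.comp_apply, h]

theorem range_liftT :
    (liftT k).range = LieSubalgebra.lieSpan k (Lfp k) (Set.range fun p : ℕ × ℕ => Telt k p.1 p.2) :=
  range_lift _

theorem normalizer_range_liftT : (liftT k).range.normalizer = ⊤ := by
  set T := Set.range fun p : ℕ × ℕ => Telt k p.1 p.2
  have hT (i j : ℕ) : Telt k i j ∈ LieSubalgebra.lieSpan k (Lfp k) T :=
    LieSubalgebra.subset_lieSpan ⟨(i, j), rfl⟩
  have h0 : gen k 0 ∈ (LieSubalgebra.lieSpan k (Lfp k) T).normalizer := by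
    refine LieSubalgebra.mem_normalizer_lieSpan ?_
    rintro _ ⟨⟨i, j⟩, rfl⟩
    rw [← lie_skew, ← Telt_succ_left]
    exact neg_mem (hT (i + 1) j)
  have h1 : gen k 1 ∈ (LieSubalgebra.lieSpan k (Lfp k) T).normalizer := by
    refine LieSubalgebra.mem_normalizer_lieSpan ?_
    rintro _ ⟨⟨i, j⟩, rfl⟩
    rw [← lie_skew, ← Telt_succ_right]
    exact neg_mem (hT i (j + 1))
  have h2 : gen k 2 ∈ (LieSubalgebra.lieSpan k (Lfp k) T).normalizer :=
    LieSubalgebra.le_normalizer _ (hT 0 0)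
  rw [eq_top_iff, ← lieSpan_range_gen, LieSubalgebra.lieSpan_le, range_liftT, Set.range_subset_iff]
  intro i
  fin_cases i
  exacts [h0, h1, h2]

theorem Telt_mem_Jideal (i j : ℕ) : Telt k i j ∈ Jideal k := by
  induction i with
  | zero =>
    induction j with
    | zero => exact LieSubmodule.subset_lieSpan rfl
    | succ j ih => rw [Telt_succ_right]; exact lie_mem_left k _ _ _ _ ih
  | succ i ih => rw [Telt_succ_left]; exact lie_mem_left k _ _ _ _ ih

/-- In `L = (ka ⊕ kb) * kx`, the ideal `J` generated by `x` is a free Lie algebra with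
free basis `T = { ad(a)^i ad(b)^j (x) : i, j ≥ 0 }`. -/
theorem ideal_of_x_is_free :
    ∃ e : FreeLieAlgebra k (ℕ × ℕ) →ₗ⁅k⁆ Lfp k,
      Function.Injective e ∧
      (∀ y : Lfp k, y ∈ e.range ↔ y ∈ Jideal k) ∧
      (∀ i j : ℕ, e (of k (i, j)) = Telt k i j) := by
  have hJ : LieIdeal.toLieSubalgebra k (Lfp k) (Jideal k) = (liftT k).range := by
    refine le_antisymm ?_ ?_
    · refine LieSubalgebra.lieSpan_le_of_normalizer_eq_top (normalizer_range_liftT k) ?_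
      rintro _ rfl
      exact ⟨of k (0, 0), lift_of_apply _ _⟩
    · rw [range_liftT, LieSubalgebra.lieSpan_le]
      rintro _ ⟨p, rfl⟩
      exact Telt_mem_Jideal k p.1 p.2
  refine ⟨liftT k, liftT_injective k, fun y => ?_, fun i j => lift_of_apply _ _⟩
  rw [← hJ]
  rfl
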